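/- Scaled variance domination under the sample-size condition: if for all k, t, s: sqrt(η̄_t/η̲_t) (Σ_a π^(k)_t(a|s) sqrt(ĥq_{π^(k),t}(s,a)))² − (1 − n_k/n) Δ^(k)_t(s) ≤ Σ_a π^(k)_t(a|s) ĥq_{π^(k),t}(s,a), where Δ^(k)_t(s) = E_{A~ĥμ_t(·|s)}[(ρ^{π^(k),ĥμ}_t)² ν_{π^(k),t}(s,A)] + V_{A~ĥμ_t(·|s)}(ρ^{π^(k),ĥμ}_t q_{π^(k),t}(s,A)), then for every k, t, s: (n_k/n) V(G^PDIS_k(τ^{ĥμ_{t:T−1}}_{t:T−1}) | S_t = s) ≤ V(G^PDIS_k(τ^{π^(k)_{t:T−1}}_{t:T−1}) | S_t = s). -/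

import Mathlib

/-!
PDIS is unbiased, so its conditional variance satisfies the Bellman-type recursion
`V_t(s) = E_{A~μ}[ρ² (q² + ν + E_{S'} V_{t+1}(S'))] - v_t(s)²`, which on-policy reads
`V_t(s) = E_{A~π}[ĥq] - v_t(s)²`. Comparing the two recursions backwards in `t`, the scaled
domination at `t + 1` propagates to `t` as soon as `E_{ĥμ}[ρ² ĥq] - (1 - n_k/n) Δ ≤ E_π[ĥq]`.
Since `ĥμ ∝ √(Σ_j w^(j))` and `η̲_t ≤ K w^(k) / Σ_j w^(j) ≤ η̄_t`, the ratio bounds give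
`E_{ĥμ}[ρ² ĥq] ≤ √(η̄_t/η̲_t) (E_π √ĥq)²`, and the sample-size condition closes the step.
-/

open Finset

section RL

variable {S A : Type*}

/-- Expectation, over the random trajectory of length `h` generated from time `t` and state `s`
by the behavior policy `μ` in the MDP with transition kernel `p`, of a functional `f` of the
trajectory (recorded as the list of successive (action, next-state) pairs).  This is the finite
sum over all trajectories weighted by their probabilities; trajectories of zero probability
contribute `0`. -/
noncomputable def Etraj [Fintype S] [Fintype A] (p : S → A → S → ℝ)
    (μ : ℕ → S → A → ℝ) : ℕ → ℕ → S → (List (A × S) → ℝ) → ℝ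
  | 0, _, _, f => f []
  | h + 1, t, s, f =>
      ∑ a : A, ∑ s' : S,
        μ t s a * p s a s' * Etraj p μ h (t + 1) s' (fun l => f ((a, s') :: l))

/-- Total (undiscounted) reward `Σ_i R_{i+1}` along a trajectory starting from state `s`. -/
noncomputable def retF (r : S → A → ℝ) : S → List (A × S) → ℝ
  | _, [] => 0
  | s, (a, s') :: l => r s a + retF r s' l

/-- The PDIS return `G^PDIS(τ^{μ_{t:T-1}}_{t:T-1}) = Σ_i (∏_{j=t}^i ρ^{π,μ}_j) R_{i+1}` of a
trajectory starting at time `t` in state `s`, with target policy `π` and behavior policy `μ`,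
in its recursive form. -/
noncomputable def pdisF (r : S → A → ℝ) (π μ : ℕ → S → A → ℝ) :
    ℕ → S → List (A × S) → ℝ
  | _, _, [] => 0
  | t, s, (a, s') :: l => π t s a / μ t s a * (r s a + pdisF r π μ (t + 1) s' l)

/-- State value function `v_{π,t}(s) = E_π[Σ_{i=t+1}^T R_i | S_t = s]` for horizon `T`. -/
noncomputable def vval [Fintype S] [Fintype A] (p : S → A → S → ℝ) (r : S → A → ℝ)
    (π : ℕ → S → A → ℝ) (T t : ℕ) (s : S) : ℝ :=
  Etraj p π (T - t) t s (retF r s)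

/-- Action value function `q_{π,t}(s,a) = E_π[Σ_{i=t+1}^T R_i | S_t = s, A_t = a]`. -/
noncomputable def qval [Fintype S] [Fintype A] (p : S → A → S → ℝ) (r : S → A → ℝ)
    (π : ℕ → S → A → ℝ) (T t : ℕ) (s : S) (a : A) : ℝ :=
  r s a + ∑ s' : S, p s a s' * vval p r π T (t + 1) s'

/-- Conditional expectation `E[G^PDIS(τ^{μ_{t:T-1}}_{t:T-1}) | S_t = s]`. -/
noncomputable def Epdis [Fintype S] [Fintype A] (p : S → A → S → ℝ) (r : S → A → ℝ)
    (π μ : ℕ → S → A → ℝ) (T t : ℕ) (s : S) : ℝ :=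
  Etraj p μ (T - t) t s (pdisF r π μ t s)

/-- Conditional variance `V(G^PDIS(τ^{μ_{t:T-1}}_{t:T-1}) | S_t = s)`. -/
noncomputable def Vpdis [Fintype S] [Fintype A] (p : S → A → S → ℝ) (r : S → A → ℝ)
    (π μ : ℕ → S → A → ℝ) (T t : ℕ) (s : S) : ℝ :=
  Etraj p μ (T - t) t s (fun l => pdisF r π μ t s l ^ 2) - Epdis p r π μ T t s ^ 2

/-- `ν_{π,t}(s,a) = V_{S'~p(·|s,a)}(v_{π,t+1}(S'))` for `t ≤ T-2`, and `ν_{π,T-1}(s,a) = 0`. -/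
noncomputable def nuval [Fintype S] [Fintype A] (p : S → A → S → ℝ) (r : S → A → ℝ)
    (π : ℕ → S → A → ℝ) (T t : ℕ) (s : S) (a : A) : ℝ :=
  if t = T - 1 then 0
  else (∑ s' : S, p s a s' * vval p r π T (t + 1) s' ^ 2)
       - (∑ s' : S, p s a s' * vval p r π T (t + 1) s') ^ 2

/-- The variance-augmented action value `ĥq_{π,t}(s,a)`:
`ĥq_{π,T-1}(s,a) = q_{π,T-1}(s,a)²` and, for `t ≤ T-2`,
`ĥq_{π,t}(s,a) = q_{π,t}(s,a)² + ν_{π,t}(s,a) + Σ_{s'} p(s'|s,a) V(G^PDIS(τ^{π_{t+1:T-1}}) | S_{t+1}=s')`. -/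
noncomputable def hq [Fintype S] [Fintype A] (p : S → A → S → ℝ) (r : S → A → ℝ)
    (π : ℕ → S → A → ℝ) (T t : ℕ) (s : S) (a : A) : ℝ :=
  if t = T - 1 then qval p r π T t s a ^ 2
  else qval p r π T t s a ^ 2 + nuval p r π T t s a
       + ∑ s' : S, p s a s' * Vpdis p r π π T (t + 1) s'

/-- The tailored behavior policy `ĥμ_t(a|s) ∝ sqrt(Σ_k π^(k)_t(a|s)² ĥq_{π^(k),t}(s,a))`,
normalized over `a ∈ 𝒜` (uniform on `𝒜` if all the weights vanish). -/
noncomputable def hmu [Fintype S] [Fintype A] (p : S → A → S → ℝ) (r : S → A → ℝ)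
    (K : ℕ) (π : Fin K → ℕ → S → A → ℝ) (T t : ℕ) (s : S) (a : A) : ℝ :=
  if (∑ b : A, Real.sqrt (∑ k : Fin K, π k t s b ^ 2 * hq p r (π k) T t s b)) = 0 then
    (Fintype.card A : ℝ)⁻¹
  else
    Real.sqrt (∑ k : Fin K, π k t s a ^ 2 * hq p r (π k) T t s a) /
      ∑ b : A, Real.sqrt (∑ k : Fin K, π k t s b ^ 2 * hq p r (π k) T t s b)

/-- `w^(k)_t(s,a) = π^(k)_t(a|s)² ĥq_{π^(k),t}(s,a)`. -/
noncomputable def wRL [Fintype S] [Fintype A] (p : S → A → S → ℝ) (r : S → A → ℝ)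
    (K : ℕ) (π : Fin K → ℕ → S → A → ℝ) (T : ℕ) (k : Fin K) (t : ℕ) (s : S) (a : A) : ℝ :=
  π k t s a ^ 2 * hq p r (π k) T t s a

/-- `η^(k)_t(s,a) = w^(k)_t(s,a) / w̄_t(s,a)` with `w̄_t(s,a) = (1/K) Σ_j w^(j)_t(s,a)`. -/
noncomputable def etaRL [Fintype S] [Fintype A] (p : S → A → S → ℝ) (r : S → A → ℝ)
    (K : ℕ) (π : Fin K → ℕ → S → A → ℝ) (T : ℕ) (k : Fin K) (t : ℕ) (s : S) (a : A) : ℝ :=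
  wRL p r K π T k t s a / ((∑ j : Fin K, wRL p r K π T j t s a) / K)

/-- `η̲_t = min_{k,s,a} η^(k)_t(s,a)`. -/
noncomputable def etaLoRL [Fintype S] [Fintype A] (p : S → A → S → ℝ) (r : S → A → ℝ)
    (K : ℕ) (π : Fin K → ℕ → S → A → ℝ) (T t : ℕ) : ℝ :=
  ⨅ x : Fin K × S × A, etaRL p r K π T x.1 t x.2.1 x.2.2

/-- `η̄_t = max_{k,s,a} η^(k)_t(s,a)`. -/
noncomputable def etaHiRL [Fintype S] [Fintype A] (p : S → A → S → ℝ) (r : S → A → ℝ)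
    (K : ℕ) (π : Fin K → ℕ → S → A → ℝ) (T t : ℕ) : ℝ :=
  ⨆ x : Fin K × S × A, etaRL p r K π T x.1 t x.2.1 x.2.2

end RL

/-- `Δ^(k)_t(s) = E_{A~ĥμ_t(·|s)}[(ρ^{π^(k),ĥμ}_t)² ν_{π^(k),t}(s,A)]
  + V_{A~ĥμ_t(·|s)}(ρ^{π^(k),ĥμ}_t q_{π^(k),t}(s,A))`. -/
noncomputable def DeltaRL {S A : Type*} [Fintype S] [Fintype A]
    (p : S → A → S → ℝ) (r : S → A → ℝ)
    (K : ℕ) (π : Fin K → ℕ → S → A → ℝ) (T : ℕ) (k : Fin K) (t : ℕ) (s : S) : ℝ :=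
  (∑ a : A, hmu p r K π T t s a *
      ((π k t s a / hmu p r K π T t s a) ^ 2 * nuval p r (π k) T t s a))
  + ((∑ a : A, hmu p r K π T t s a *
        (π k t s a / hmu p r K π T t s a * qval p r (π k) T t s a) ^ 2)
     - (∑ a : A, hmu p r K π T t s a *
        (π k t s a / hmu p r K π T t s a * qval p r (π k) T t s a)) ^ 2)

lemma sum_mul_add_sq {ι : Type*} [Fintype ι] {w : ι → ℝ} (hw : ∑ i, w i = 1) (b : ℝ)
    (x : ι → ℝ) :
    ∑ i, w i * (b + x i) ^ 2
      = (b + ∑ i, w i * x i) ^ 2 + (∑ i, w i * x i ^ 2 - (∑ i, w i * x i) ^ 2) := by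
  have expand : ∑ i, w i * (b + x i) ^ 2
      = b ^ 2 * ∑ i, w i + 2 * b * ∑ i, w i * x i + ∑ i, w i * x i ^ 2 := by
    simp only [mul_sum, ← sum_add_distrib]
    exact sum_congr rfl fun i _ => by ring
  rw [expand, hw]
  ring

lemma sum_sqrt_mul_sum_div_sqrt_le {ι : Type*} [Fintype ι] {w V : ι → ℝ} {lo hi : ℝ}
    (hlo : 0 < lo) (hV : ∀ i, 0 < V i) (hlo_le : ∀ i, lo ≤ w i / V i)
    (hle_hi : ∀ i, w i / V i ≤ hi) :
    (∑ i, √(V i)) * ∑ i, w i / √(V i) ≤ √(hi / lo) * (∑ i, √(w i)) ^ 2 := by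
  have hlo_mul : ∀ i, lo * V i ≤ w i := fun i => (le_div_iff₀ (hV i)).1 (hlo_le i)
  have hw : ∀ i, 0 ≤ w i := fun i => (mul_pos hlo (hV i)).le.trans (hlo_mul i)
  have hsqrtV : ∀ i, √(V i) ≤ √(w i) / √lo := fun i => by
    rw [← Real.sqrt_div' _ hlo.le]
    exact Real.sqrt_le_sqrt ((le_div_iff₀' hlo).2 (hlo_mul i))
  have hdiv : ∀ i, w i / √(V i) ≤ √hi * √(w i) := fun i => by
    have hsplit : w i / √(V i) = √(w i) * √(w i / V i) := by
      rw [Real.sqrt_div' _ (hV i).le, ← mul_div_assoc, Real.mul_self_sqrt (hw i)]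
    rw [hsplit, mul_comm √hi]
    gcongr
    exact hle_hi i
  calc (∑ i, √(V i)) * ∑ i, w i / √(V i)
      ≤ (∑ i, √(w i) / √lo) * ∑ i, √hi * √(w i) :=
        mul_le_mul (sum_le_sum fun i _ => hsqrtV i) (sum_le_sum fun i _ => hdiv i)
          (sum_nonneg fun i _ => div_nonneg (hw i) (Real.sqrt_nonneg _))
          (sum_nonneg fun i _ => by positivity)
    _ = √(hi / lo) * (∑ i, √(w i)) ^ 2 := by
        rw [← sum_div, ← mul_sum, Real.sqrt_div' _ hlo.le]
        ring

section Trajectory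

variable {S A : Type*} [Fintype S] [Fintype A] {p : S → A → S → ℝ}
  {μ : ℕ → S → A → ℝ}

lemma Etraj_add (h t : ℕ) (s : S) (f g : List (A × S) → ℝ) :
    Etraj p μ h t s (fun l => f l + g l) = Etraj p μ h t s f + Etraj p μ h t s g := by
  induction h generalizing t s f g with
  | zero => rfl
  | succ h ih => simp only [Etraj, ih, mul_add, sum_add_distrib]

lemma Etraj_const_mul (c : ℝ) (h t : ℕ) (s : S) (f : List (A × S) → ℝ) :
    Etraj p μ h t s (fun l => c * f l) = c * Etraj p μ h t s f := by
  induction h generalizing t s f with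
  | zero => rfl
  | succ h ih => simp only [Etraj, ih, mul_sum, mul_left_comm c]

lemma Etraj_const {T : ℕ} (hp1 : ∀ s a, ∑ s', p s a s' = 1)
    (hμ1 : ∀ i s, i < T → ∑ a, μ i s a = 1) (c : ℝ) {h t : ℕ} (hh : t + h ≤ T)
    (s : S) :
    Etraj p μ h t s (fun _ => c) = c := by
  induction h generalizing t s with
  | zero => rfl
  | succ h ih =>
    simp only [Etraj, ih (t := t + 1) (by omega), ← sum_mul, ← mul_sum, hp1, mul_one,
      hμ1 t s (by omega), one_mul]

lemma Etraj_const_add {T : ℕ} (hp1 : ∀ s a, ∑ s', p s a s' = 1)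
    (hμ1 : ∀ i s, i < T → ∑ a, μ i s a = 1) (b : ℝ) {h t : ℕ} (hh : t + h ≤ T) (s : S)
    (f : List (A × S) → ℝ) :
    Etraj p μ h t s (fun l => b + f l) = b + Etraj p μ h t s f := by
  rw [Etraj_add, Etraj_const hp1 hμ1 _ hh]

end Trajectory

section ValueFunctions

variable {S A : Type*} [Fintype S] [Fintype A] {p : S → A → S → ℝ} {r : S → A → ℝ}
  {π μ : ℕ → S → A → ℝ} {T t : ℕ}

lemma vval_horizon (s : S) : vval p r π T T s = 0 := by
  simp [vval, Etraj, retF]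

lemma Vpdis_horizon (s : S) : Vpdis p r π μ T T s = 0 := by
  simp [Vpdis, Epdis, Etraj, pdisF]

lemma nuval_of_lt (ht : t < T) (s : S) (a : A) :
    nuval p r π T t s a = (∑ s', p s a s' * vval p r π T (t + 1) s' ^ 2)
       - (∑ s', p s a s' * vval p r π T (t + 1) s') ^ 2 := by
  rw [nuval]
  split_ifs with h
  · simp [show t + 1 = T by omega, vval_horizon]
  · rfl

lemma hq_of_lt (ht : t < T) (s : S) (a : A) :
    hq p r π T t s a = qval p r π T t s a ^ 2 + nuval p r π T t s a
      + ∑ s', p s a s' * Vpdis p r π π T (t + 1) s' := by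
  rw [hq]
  split_ifs with h
  · obtain rfl : T = t + 1 := by omega
    simp [nuval, Vpdis_horizon]
  · rfl

lemma vval_eq_sum_qval (hp1 : ∀ s a, ∑ s', p s a s' = 1)
    (hπ1 : ∀ i s, i < T → ∑ a, π i s a = 1) (ht : t < T) (s : S) :
    vval p r π T t s = ∑ a, π t s a * qval p r π T t s a := by
  rw [vval, show T - t = T - (t + 1) + 1 by omega, Etraj]
  refine sum_congr rfl fun a _ => ?_
  have hcons : ∀ s', Etraj p π (T - (t + 1)) (t + 1) s' (fun l => retF r s ((a, s') :: l))
      = r s a + vval p r π T (t + 1) s' := fun s' => by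
    simp only [retF, Etraj_const_add hp1 hπ1 _ (show t + 1 + (T - (t + 1)) ≤ T by omega), vval]
  simp only [hcons, qval, mul_add, mul_sum, sum_add_distrib, ← sum_mul]
  rw [← mul_sum, hp1]
  simp only [mul_one, mul_assoc]

lemma Etraj_pdisF_eq (hp1 : ∀ s a, ∑ s', p s a s' = 1)
    (hμ1 : ∀ i s, i < T → ∑ a, μ i s a = 1) (hπ1 : ∀ i s, i < T → ∑ a, π i s a = 1)
    (hsupp : ∀ i s a, i < T → μ i s a = 0 → π i s a = 0) {h t : ℕ} (hh : t + h ≤ T)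
    (s : S) :
    Etraj p μ h t s (pdisF r π μ t s) = Etraj p π h t s (retF r s) := by
  induction h generalizing t s with
  | zero => rfl
  | succ h ih =>
    refine sum_congr rfl fun a _ => sum_congr rfl fun s' _ => ?_
    have hh' : t + 1 + h ≤ T := by omega
    simp only [pdisF, retF, Etraj_const_mul, Etraj_const_add hp1 hμ1 _ hh',
      Etraj_const_add hp1 hπ1 _ hh', ih hh']
    by_cases h0 : μ t s a = 0
    · simp [h0, hsupp t s a (by omega) h0]
    · field_simp

lemma Epdis_eq_vval (hp1 : ∀ s a, ∑ s', p s a s' = 1)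
    (hμ1 : ∀ i s, i < T → ∑ a, μ i s a = 1) (hπ1 : ∀ i s, i < T → ∑ a, π i s a = 1)
    (hsupp : ∀ i s a, i < T → μ i s a = 0 → π i s a = 0) (ht : t ≤ T) (s : S) :
    Epdis p r π μ T t s = vval p r π T t s :=
  Etraj_pdisF_eq hp1 hμ1 hπ1 hsupp (by omega) s

lemma Vpdis_eq_of_lt (hp1 : ∀ s a, ∑ s', p s a s' = 1)
    (hμ1 : ∀ i s, i < T → ∑ a, μ i s a = 1) (hπ1 : ∀ i s, i < T → ∑ a, π i s a = 1)
    (hsupp : ∀ i s a, i < T → μ i s a = 0 → π i s a = 0) (ht : t < T) (s : S) :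
    Vpdis p r π μ T t s =
      ∑ a, μ t s a * (π t s a / μ t s a) ^ 2 *
        (qval p r π T t s a ^ 2 + nuval p r π T t s a
          + ∑ s', p s a s' * Vpdis p r π μ T (t + 1) s')
      - vval p r π T t s ^ 2 := by
  have hmean : ∀ s', Etraj p μ (T - (t + 1)) (t + 1) s' (pdisF r π μ (t + 1) s')
      = vval p r π T (t + 1) s' := fun s' => Epdis_eq_vval hp1 hμ1 hπ1 hsupp ht s'
  have hsecond : ∀ s',
      Etraj p μ (T - (t + 1)) (t + 1) s' (fun l => pdisF r π μ (t + 1) s' l ^ 2)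
        = Vpdis p r π μ T (t + 1) s' + vval p r π T (t + 1) s' ^ 2 := fun s' => by
    rw [Vpdis, Epdis_eq_vval hp1 hμ1 hπ1 hsupp ht s']
    ring
  rw [Vpdis, Epdis_eq_vval hp1 hμ1 hπ1 hsupp ht.le, show T - t = T - (t + 1) + 1 by omega, Etraj]
  congr 1
  refine sum_congr rfl fun a _ => ?_
  set ρ := π t s a / μ t s a
  have hcons : ∀ s',
      Etraj p μ (T - (t + 1)) (t + 1) s' (fun l => pdisF r π μ t s ((a, s') :: l) ^ 2)
        = ρ ^ 2 * ((r s a + vval p r π T (t + 1) s') ^ 2 + Vpdis p r π μ T (t + 1) s') := by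
    intro s'
    have hsq : (fun l => pdisF r π μ t s ((a, s') :: l) ^ 2) = fun l => ρ ^ 2 * r s a ^ 2
        + (2 * ρ ^ 2 * r s a * pdisF r π μ (t + 1) s' l
          + ρ ^ 2 * pdisF r π μ (t + 1) s' l ^ 2) := by
      funext l
      simp only [pdisF]
      ring
    rw [hsq, Etraj_const_add hp1 hμ1 _ (by omega), Etraj_add, Etraj_const_mul, Etraj_const_mul,
      hmean, hsecond]
    ring
  calc ∑ s', μ t s a * p s a s' *
        Etraj p μ (T - (t + 1)) (t + 1) s' (fun l => pdisF r π μ t s ((a, s') :: l) ^ 2)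
      = μ t s a * ρ ^ 2 * (∑ s', p s a s' * (r s a + vval p r π T (t + 1) s') ^ 2
          + ∑ s', p s a s' * Vpdis p r π μ T (t + 1) s') := by
        simp only [hcons, mul_add, sum_add_distrib, mul_sum]
        congr 1 <;> exact sum_congr rfl fun s' _ => by ring
    _ = _ := by rw [sum_mul_add_sq (hp1 s a), qval, nuval_of_lt ht]

lemma Vpdis_self_eq_of_lt (hp1 : ∀ s a, ∑ s', p s a s' = 1)
    (hπ1 : ∀ i s, i < T → ∑ a, π i s a = 1) (ht : t < T) (s : S) :
    Vpdis p r π π T t s = ∑ a, π t s a * hq p r π T t s a - vval p r π T t s ^ 2 := by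
  rw [Vpdis_eq_of_lt hp1 hπ1 hπ1 (fun _ _ _ _ h => h) ht]
  congr 1
  refine sum_congr rfl fun a _ => ?_
  rw [hq_of_lt ht]
  by_cases h0 : π t s a = 0
  · simp [h0]
  · rw [div_self h0, one_pow, mul_one]

theorem mul_Vpdis_le_Vpdis_self (hp0 : ∀ s a s', 0 ≤ p s a s')
    (hp1 : ∀ s a, ∑ s', p s a s' = 1)
    (hμ0 : ∀ i s a, i < T → 0 ≤ μ i s a) (hμ1 : ∀ i s, i < T → ∑ a, μ i s a = 1)
    (hπ1 : ∀ i s, i < T → ∑ a, π i s a = 1)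
    (hsupp : ∀ i s a, i < T → μ i s a = 0 → π i s a = 0) (c : ℝ)
    (hstep : ∀ t < T, ∀ s,
      ∑ a, μ t s a * (π t s a / μ t s a) ^ 2 * hq p r π T t s a
        - (1 - c) * (∑ a, μ t s a * (π t s a / μ t s a) ^ 2 *
            (qval p r π T t s a ^ 2 + nuval p r π T t s a) - vval p r π T t s ^ 2)
        ≤ ∑ a, π t s a * hq p r π T t s a)
    (ht : t ≤ T) (s : S) :
    c * Vpdis p r π μ T t s ≤ Vpdis p r π π T t s := by
  induction ht using Nat.decreasingInduction generalizing s with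
  | self => simp [Vpdis_horizon]
  | of_succ t ht ih =>
    set M : A → ℝ := fun a => μ t s a * (π t s a / μ t s a) ^ 2
    set X : A → ℝ := fun a => qval p r π T t s a ^ 2 + nuval p r π T t s a
    have hscaled : c * Vpdis p r π μ T t s
        = ∑ a, M a * (c * X a + ∑ s', p s a s' * (c * Vpdis p r π μ T (t + 1) s'))
          - c * vval p r π T t s ^ 2 := by
      rw [Vpdis_eq_of_lt hp1 hμ1 hπ1 hsupp ht, mul_sub, mul_sum]
      congr 1
      refine sum_congr rfl fun a _ => ?_
      simp only [mul_left_comm _ c, ← mul_sum]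
      ring
    have hih : ∑ a, M a * (c * X a + ∑ s', p s a s' * (c * Vpdis p r π μ T (t + 1) s'))
        ≤ ∑ a, M a * (c * X a + ∑ s', p s a s' * Vpdis p r π π T (t + 1) s') := by
      gcongr with a _ s' _
      · exact mul_nonneg (hμ0 t s a ht) (sq_nonneg _)
      · exact hp0 s a s'
      · exact ih s'
    have hrest : ∑ a, M a * (c * X a + ∑ s', p s a s' * Vpdis p r π π T (t + 1) s')
        = ∑ a, M a * hq p r π T t s a - (1 - c) * ∑ a, M a * X a := by
      rw [mul_sum, ← sum_sub_distrib]
      refine sum_congr rfl fun a _ => ?_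
      rw [hq_of_lt ht]
      ring
    rw [Vpdis_self_eq_of_lt hp1 hπ1 ht]
    linarith [hstep t ht s]

end ValueFunctions

section BehaviorPolicy

variable {S A : Type*} [Fintype S] [Fintype A] {p : S → A → S → ℝ} {r : S → A → ℝ}
  {K : ℕ} {π : Fin K → ℕ → S → A → ℝ} {T t : ℕ} {s : S}

lemma sum_sqrt_sum_wRL_pos [Nonempty A] (hW : ∀ a, 0 < ∑ j, wRL p r K π T j t s a) :
    0 < ∑ b, √(∑ j, wRL p r K π T j t s b) :=
  sum_pos (fun b _ => Real.sqrt_pos.2 (hW b)) univ_nonempty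

lemma hmu_eq_of_pos [Nonempty A] (hW : ∀ a, 0 < ∑ j, wRL p r K π T j t s a) (a : A) :
    hmu p r K π T t s a
      = √(∑ j, wRL p r K π T j t s a) / ∑ b, √(∑ j, wRL p r K π T j t s b) :=
  if_neg (sum_sqrt_sum_wRL_pos hW).ne'

lemma hmu_pos [Nonempty A] (hW : ∀ a, 0 < ∑ j, wRL p r K π T j t s a) (a : A) :
    0 < hmu p r K π T t s a := by
  rw [hmu_eq_of_pos hW]
  exact div_pos (Real.sqrt_pos.2 (hW a)) (sum_sqrt_sum_wRL_pos hW)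

lemma sum_hmu [Nonempty A] (hW : ∀ a, 0 < ∑ j, wRL p r K π T j t s a) :
    ∑ a, hmu p r K π T t s a = 1 := by
  simp only [hmu_eq_of_pos hW, ← sum_div]
  exact div_self (sum_sqrt_sum_wRL_pos hW).ne'

lemma etaLoRL_le (k : Fin K) (a : A) : etaLoRL p r K π T t ≤ etaRL p r K π T k t s a :=
  ciInf_le (Finite.bddBelow_range _) (k, s, a)

lemma etaRL_le_etaHiRL (k : Fin K) (a : A) : etaRL p r K π T k t s a ≤ etaHiRL p r K π T t :=
  le_ciSup (f := fun x : Fin K × S × A => etaRL p r K π T x.1 t x.2.1 x.2.2)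
    (Finite.bddAbove_range _) (k, s, a)

lemma sum_hmu_mul_sq_mul_hq_le [Nonempty A] (k : Fin K) (hπ0 : ∀ a, 0 ≤ π k t s a)
    (hW : ∀ a, 0 < ∑ j, wRL p r K π T j t s a) (hlo : 0 < etaLoRL p r K π T t) :
    ∑ a, hmu p r K π T t s a * (π k t s a / hmu p r K π T t s a) ^ 2 * hq p r (π k) T t s a
      ≤ √(etaHiRL p r K π T t / etaLoRL p r K π T t) *
          (∑ a, π k t s a * √(hq p r (π k) T t s a)) ^ 2 := by
  have hK : (0 : ℝ) < K := by exact_mod_cast k.pos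
  have hlhs : ∑ a, hmu p r K π T t s a * (π k t s a / hmu p r K π T t s a) ^ 2
        * hq p r (π k) T t s a
      = (∑ b, √(∑ j, wRL p r K π T j t s b))
          * ∑ a, wRL p r K π T k t s a / √(∑ j, wRL p r K π T j t s a) := by
    rw [mul_sum]
    refine sum_congr rfl fun a _ => ?_
    have hWa : 0 < √(∑ j, wRL p r K π T j t s a) := Real.sqrt_pos.2 (hW a)
    rw [hmu_eq_of_pos hW, wRL]
    field_simp
  have hsqrt (a : A) : √(wRL p r K π T k t s a) = π k t s a * √(hq p r (π k) T t s a) := by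
    rw [wRL, Real.sqrt_mul (sq_nonneg _), Real.sqrt_sq (hπ0 a)]
  have hratio : etaHiRL p r K π T t / K / (etaLoRL p r K π T t / K)
      = etaHiRL p r K π T t / etaLoRL p r K π T t := div_div_div_cancel_right₀ hK.ne' _ _
  have hη (a : A) : etaRL p r K π T k t s a / K
      = wRL p r K π T k t s a / ∑ j, wRL p r K π T j t s a := by
    rw [etaRL, div_div_eq_mul_div, div_div, mul_div_mul_right _ _ hK.ne']
  rw [hlhs, ← hratio]
  simp only [← hsqrt]
  refine sum_sqrt_mul_sum_div_sqrt_le (div_pos hlo hK) hW (fun a => ?_) (fun a => ?_)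
  · rw [← hη]
    exact div_le_div_of_nonneg_right (etaLoRL_le k a) hK.le
  · rw [← hη]
    exact div_le_div_of_nonneg_right (etaRL_le_etaHiRL k a) hK.le

lemma DeltaRL_eq (k : Fin K) (hμ : ∀ a, 0 < hmu p r K π T t s a) :
    DeltaRL p r K π T k t s
      = ∑ a, hmu p r K π T t s a * (π k t s a / hmu p r K π T t s a) ^ 2 *
          (qval p r (π k) T t s a ^ 2 + nuval p r (π k) T t s a)
        - (∑ a, π k t s a * qval p r (π k) T t s a) ^ 2 := by
  have hmean :
      ∑ a, hmu p r K π T t s a * (π k t s a / hmu p r K π T t s a * qval p r (π k) T t s a)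
        = ∑ a, π k t s a * qval p r (π k) T t s a :=
    sum_congr rfl fun a _ => by field_simp [(hμ a).ne']
  rw [DeltaRL, hmean, ← add_sub_assoc, ← sum_add_distrib]
  congr 1
  exact sum_congr rfl fun a _ => by ring

end BehaviorPolicy

theorem stmt15_general {S A : Type*} [Fintype S] [Fintype A] [Nonempty A]
    (p : S → A → S → ℝ) (r : S → A → ℝ)
    (hp0 : ∀ s a s', 0 ≤ p s a s') (hp1 : ∀ s a, ∑ s' : S, p s a s' = 1)
    (T : ℕ)
    (K : ℕ) (π : Fin K → ℕ → S → A → ℝ)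
    (hπ : ∀ k t s, t < T → (∀ a, 0 ≤ π k t s a) ∧ (∑ a : A, π k t s a = 1))
    (hwbar : ∀ t, t < T → ∀ (s : S) (a : A),
      0 < (∑ j : Fin K, wRL p r K π T j t s a) / K)
    (hlo : ∀ t, t < T → 0 < etaLoRL p r K π T t)
    (nk : Fin K → ℕ) (n : ℕ)
    (hcond : ∀ (k : Fin K) (t : ℕ), t < T → ∀ s : S,
      Real.sqrt (etaHiRL p r K π T t / etaLoRL p r K π T t) *
          (∑ a : A, π k t s a * Real.sqrt (hq p r (π k) T t s a)) ^ 2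
        - (1 - (nk k : ℝ) / (n : ℝ)) * DeltaRL p r K π T k t s
        ≤ ∑ a : A, π k t s a * hq p r (π k) T t s a) :
    ∀ (k : Fin K) (t : ℕ), t < T → ∀ s : S,
      ((nk k : ℝ) / (n : ℝ)) * Vpdis p r (π k) (hmu p r K π T) T t s
        ≤ Vpdis p r (π k) (π k) T t s := by
  intro k t ht s
  have hW : ∀ t < T, ∀ s a, 0 < ∑ j, wRL p r K π T j t s a := fun t ht s a =>
    (div_pos_iff_of_pos_right (by exact_mod_cast k.pos)).1 (hwbar t ht s a)
  have hμ : ∀ t < T, ∀ s a, 0 < hmu p r K π T t s a := fun t ht s => hmu_pos (hW t ht s)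
  have hπ1 : ∀ i s, i < T → ∑ a, π k i s a = 1 := fun i s hi => (hπ k i s hi).2
  refine mul_Vpdis_le_Vpdis_self hp0 hp1 (fun i s a hi => (hμ i hi s a).le)
    (fun i s hi => sum_hmu (hW i hi s)) hπ1 (fun i s a hi h0 => absurd h0 (hμ i hi s a).ne')
    _ (fun t ht s => ?_) ht.le s
  have hkey := sum_hmu_mul_sq_mul_hq_le k (hπ k t s ht).1 (hW t ht s) (hlo t ht)
  have hsample := hcond k t ht s
  rw [DeltaRL_eq k (hμ t ht s)] at hsample
  rw [vval_eq_sum_qval hp1 hπ1 ht]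
  linarith

/-- scaled variance domination under the sample-size condition: under the
similarity condition with sample sizes, for every `k`, `t ∈ {0,…,T-1}` and state `s`,
`(n_k/n) V(G^PDIS_k(τ^{ĥμ_{t:T-1}}) | S_t = s) ≤ V(G^PDIS_k(τ^{π^(k)_{t:T-1}}) | S_t = s)`. -/
theorem stmt15 {S A : Type*} [Fintype S] [Fintype A] [Nonempty S] [Nonempty A]
    (p : S → A → S → ℝ) (r : S → A → ℝ)
    (hp0 : ∀ s a s', 0 ≤ p s a s') (hp1 : ∀ s a, ∑ s' : S, p s a s' = 1)
    (T : ℕ) (hT : 1 ≤ T)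
    (K : ℕ) (hK : 0 < K) (π : Fin K → ℕ → S → A → ℝ)
    (hπ : ∀ k t s, t < T → (∀ a, 0 ≤ π k t s a) ∧ (∑ a : A, π k t s a = 1))
    (hwbar : ∀ t, t < T → ∀ (s : S) (a : A),
      0 < (∑ j : Fin K, wRL p r K π T j t s a) / K)
    (hlo : ∀ t, t < T → 0 < etaLoRL p r K π T t)
    (nk : Fin K → ℕ) (hnk : ∀ k, 0 < nk k) (n : ℕ) (hn : n = ∑ k : Fin K, nk k)
    (hcond : ∀ (k : Fin K) (t : ℕ), t < T → ∀ s : S,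
      Real.sqrt (etaHiRL p r K π T t / etaLoRL p r K π T t) *
          (∑ a : A, π k t s a * Real.sqrt (hq p r (π k) T t s a)) ^ 2
        - (1 - (nk k : ℝ) / (n : ℝ)) * DeltaRL p r K π T k t s
        ≤ ∑ a : A, π k t s a * hq p r (π k) T t s a) :
    ∀ (k : Fin K) (t : ℕ), t < T → ∀ s : S,
      ((nk k : ℝ) / (n : ℝ)) * Vpdis p r (π k) (hmu p r K π T) T t s
        ≤ Vpdis p r (π k) (π k) T t s :=
  stmt15_general p r hp0 hp1 T K π hπ hwbar hlo nk n hcond
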